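/- Let D be a triangulated category, A the heart of a bounded t-structure on D with cohomology functor H, and (T, F) a torsion pair in A. Then the full subcategory A^♯ = {E ∈ D : H^i(E) = 0 for i ∉ {-1, 0}, H^{-1}(E) ∈ F, H^0(E) ∈ T} is the heart of a bounded t-structure on D. -/

import Mathlib

open CategoryTheory CategoryTheory.Limits CategoryTheory.Pretriangulated

universe v u

variable {D : Type u} [Category.{v} D] [HasZeroObject D] [Preadditive D] [HasShift D ℤ]
  [∀ n : ℤ, (shiftFunctor D n).Additive] [Pretriangulated D]

/-- A full subcategory (given by a class of objects) `A` of a triangulated category is the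
heart of a bounded t-structure iff `Hom(A₁, A₂[k]) = 0` for `k < 0` and every nonzero
object admits a finite filtration by distinguished triangles whose factors are shifts
`A'[k]` of objects of `A` with strictly decreasing shifts. -/
def IsHeartOfBoundedTStructure (A : Set D) : Prop :=
  (∀ A₁ ∈ A, ∀ A₂ ∈ A, ∀ k : ℤ, k < 0 → ∀ f : A₁ ⟶ (shiftFunctor D k).obj A₂, f = 0) ∧
  (∀ E : D, ¬ IsZero E →
    ∃ (n : ℕ) (Fl : Fin (n + 1) → D) (g : ∀ i : Fin n, Fl i.castSucc ⟶ Fl i.succ)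
      (ks : Fin n → ℤ),
      IsZero (Fl 0) ∧ Fl (Fin.last n) = E ∧ (∀ i j : Fin n, i < j → ks j < ks i) ∧
      ∀ i : Fin n, ∃ (Q : D) (q : Fl i.succ ⟶ Q)
        (h : Q ⟶ (shiftFunctor D (1 : ℤ)).obj (Fl i.castSucc)),
        (Triangle.mk (g i) q h ∈ distTriang D) ∧
        ∃ A' ∈ A, Nonempty (Q ≅ (shiftFunctor D (ks i)).obj A'))

/-- The extension closure of a class of objects `S` of a triangulated category: the
smallest class containing the zero objects and `S` which is closed under extensions. -/
inductive ExtClosure (S : Set D) : D → Prop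
  | zero (E : D) : IsZero E → ExtClosure S E
  | of (E : D) : E ∈ S → ExtClosure S E
  | ext (A B C : D) (f : A ⟶ B) (g : B ⟶ C)
      (h : C ⟶ (shiftFunctor D (1 : ℤ)).obj A) :
      (Triangle.mk f g h ∈ distTriang D) → ExtClosure S A → ExtClosure S C →
      ExtClosure S B

variable (D) in
/-- A slicing of a triangulated category: full subcategories `P φ` of semistable objects
of phase `φ` with compatibility with shifts, vanishing of morphisms of decreasing phases
and Harder–Narasimhan filtrations. -/
structure Slicing where
  /-- the semistable objects of phase `φ` -/
  P : ℝ → Set D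
  shift_P : ∀ (φ : ℝ) (E : D), E ∈ P φ ↔ (shiftFunctor D (1 : ℤ)).obj E ∈ P (φ + 1)
  hom_zero : ∀ φ₁ φ₂ : ℝ, φ₂ < φ₁ → ∀ A ∈ P φ₁, ∀ B ∈ P φ₂, ∀ f : A ⟶ B, f = 0
  hn : ∀ E : D, ¬ IsZero E →
    ∃ (n : ℕ) (Fl : Fin (n + 1) → D) (g : ∀ i : Fin n, Fl i.castSucc ⟶ Fl i.succ)
      (φs : Fin n → ℝ),
      IsZero (Fl 0) ∧ Fl (Fin.last n) = E ∧ (∀ i j : Fin n, i < j → φs j < φs i) ∧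
      ∀ i : Fin n, ∃ (Q : D) (q : Fl i.succ ⟶ Q)
        (h : Q ⟶ (shiftFunctor D (1 : ℤ)).obj (Fl i.castSucc)),
        Q ∈ P (φs i) ∧ (Triangle.mk (g i) q h ∈ distTriang D)

variable (D) in
/-- A stability condition `σ = (Z, P)` on a triangulated category: a slicing `P` together
with a central charge `Z` mapping nonzero objects of `P φ` to `ℝ_{>0}·exp(iπφ)`. -/
structure StabilityCondition extends Slicing D where
  /-- the central charge -/
  Z : D → ℂ
  Z_pos : ∀ φ : ℝ, ∀ E ∈ P φ, ¬ IsZero E → ∃ r : ℝ, 0 < r ∧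
    Z E = (r : ℂ) * Complex.exp ((φ : ℂ) * (Real.pi : ℂ) * Complex.I)

/-- A simple (= stable) object of phase `φ` of a slicing: a nonzero object of `P φ` which
admits no decomposition by a distinguished triangle with nonzero outer terms in `P φ`. -/
def Slicing.Simple (σ : Slicing D) (φ : ℝ) (E : D) : Prop :=
  E ∈ σ.P φ ∧ ¬ IsZero E ∧
    ∀ (A B : D) (f : A ⟶ E) (g : E ⟶ B) (h : B ⟶ (shiftFunctor D (1 : ℤ)).obj A),
      A ∈ σ.P φ → B ∈ σ.P φ → (Triangle.mk f g h ∈ distTriang D) →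
      IsZero A ∨ IsZero B

/-- `P I` for an interval `I ⊆ ℝ`: the extension closure of the `P φ`, `φ ∈ I`. -/
def Slicing.PInt (σ : Slicing D) (I : Set ℝ) : Set D :=
  {E | ExtClosure (⋃ φ ∈ I, σ.P φ) E}

/-!
Every object of `D` has a filtration whose factors are shifts `B⟦k⟧` of objects `B` of the
heart `A`, with strictly decreasing `k`. The torsion pair splits each `B` as `X → B → Y` with
`X ∈ T`, `Y ∈ F`, so `B⟦k⟧` is an extension of `Y⟦1⟧⟦k - 1⟧` by `X⟦k⟧`, and both `X` and
`Y⟦1⟧` lie in the tilted heart. Refining the filtration accordingly gives a filtration by shifts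
of objects of the tilted heart, except that when two consecutive shifts differ by one, the
factors `Y⟦1⟧⟦k - 1⟧` and `X'⟦k - 1⟧` have the same shift; they are merged into one factor
`G⟦k - 1⟧` with `Y⟦1⟧ → G → X'`, again in the tilted heart. Refining and merging are instances
of the octahedral axiom, which a pretriangulated category need not satisfy; here they follow
from `Hom(T, F) = 0` and the vanishing of negative `Hom`s between objects of `A`, which also
give the vanishing of negative `Hom`s in the tilted heart.
-/

namespace HeartTilting

open Category

lemma eq_zero_of_iso {C : Type*} [Category C] [HasZeroMorphisms C] {P P' Q Q' : C}
    (e : P ≅ P') (e' : Q ≅ Q') (h : ∀ f : P' ⟶ Q', f = 0) (f : P ⟶ Q) : f = 0 := by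
  simpa using congrArg (fun φ => e.hom ≫ φ ≫ e'.inv) (h (e.inv ≫ f ≫ e'.hom))

lemma eq_zero_of_shift {C : Type*} [Category C] [Preadditive C] [HasShift C ℤ]
    [∀ n : ℤ, (shiftFunctor C n).Additive] {P Q : C} (h : ∀ f : P ⟶ Q, f = 0) (n : ℤ)
    (f : P⟦n⟧ ⟶ Q⟦n⟧) : f = 0 := by
  rw [← (shiftFunctor C n).map_preimage f, h ((shiftFunctor C n).preimage f), Functor.map_zero]

def ExistsDistTriang (X₁ X₂ X₃ : D) : Prop :=
  ∃ (f : X₁ ⟶ X₂) (g : X₂ ⟶ X₃) (h : X₃ ⟶ X₁⟦(1 : ℤ)⟧), Triangle.mk f g h ∈ distTriang D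

namespace ExistsDistTriang

variable {X₁ X₂ X₃ : D}

lemma of_iso {Y₁ Y₂ Y₃ : D} (hT : ExistsDistTriang X₁ X₂ X₃) (e₁ : X₁ ≅ Y₁) (e₂ : X₂ ≅ Y₂)
    (e₃ : X₃ ≅ Y₃) : ExistsDistTriang Y₁ Y₂ Y₃ := by
  obtain ⟨f, g, h, hT⟩ := hT
  refine ⟨e₁.inv ≫ f ≫ e₂.hom, e₂.inv ≫ g ≫ e₃.hom, e₃.inv ≫ h ≫ e₁.hom⟦(1 : ℤ)⟧',
    isomorphic_distinguished _ hT _ (Triangle.isoMk _ _ e₁.symm e₂.symm e₃.symm ?_ ?_ ?_)⟩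
  all_goals unfold Triangle.mk; dsimp; simp

lemma shift (hT : ExistsDistTriang X₁ X₂ X₃) (n : ℤ) :
    ExistsDistTriang (X₁⟦n⟧) (X₂⟦n⟧) (X₃⟦n⟧) := by
  obtain ⟨f, g, h, hT⟩ := hT
  exact ExistsDistTriang.of_iso ⟨_, _, _, Triangle.shift_distinguished _ hT n⟩
    (Iso.refl _) (Iso.refl _) (Iso.refl _)

lemma rotate (hT : ExistsDistTriang X₁ X₂ X₃) : ExistsDistTriang X₂ X₃ (X₁⟦(1 : ℤ)⟧) := by
  obtain ⟨f, g, h, hT⟩ := hT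
  exact ⟨_, _, _, rot_of_distTriang _ hT⟩

lemma homs_from_obj₂_eq_zero {Z : D} (hT : ExistsDistTriang X₁ X₂ X₃)
    (h₁ : ∀ φ : X₁ ⟶ Z, φ = 0) (h₃ : ∀ φ : X₃ ⟶ Z, φ = 0) (φ : X₂ ⟶ Z) : φ = 0 := by
  obtain ⟨f, g, h, hT⟩ := hT
  obtain ⟨ψ, hψ⟩ : ∃ ψ : X₃ ⟶ Z, φ = g ≫ ψ := Triangle.yoneda_exact₂ _ hT φ (h₁ _)
  rw [hψ, h₃ ψ, comp_zero]

lemma homs_to_obj₂_eq_zero {Z : D} (hT : ExistsDistTriang X₁ X₂ X₃)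
    (h₁ : ∀ φ : Z ⟶ X₁, φ = 0) (h₃ : ∀ φ : Z ⟶ X₃, φ = 0) (φ : Z ⟶ X₂) : φ = 0 := by
  obtain ⟨f, g, h, hT⟩ := hT
  obtain ⟨ψ, hψ⟩ : ∃ ψ : Z ⟶ X₁, φ = ψ ≫ f := Triangle.coyoneda_exact₂ _ hT φ (h₃ _)
  rw [hψ, h₁ ψ, zero_comp]

end ExistsDistTriang

lemma distTriang_eqToHom {X₁ X₁' X₂ X₂' X₃ : D} {f : X₁ ⟶ X₂} {q : X₂ ⟶ X₃}
    {h : X₃ ⟶ X₁⟦(1 : ℤ)⟧} (hT : Triangle.mk f q h ∈ distTriang D) (e₁ : X₁' = X₁)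
    (e₂ : X₂' = X₂) :
    Triangle.mk (eqToHom e₁ ≫ f ≫ eqToHom e₂.symm) (eqToHom e₂ ≫ q)
      (h ≫ (eqToHom e₁.symm)⟦(1 : ℤ)⟧') ∈ distTriang D := by
  subst e₁ e₂
  simpa using hT

section Exactness

variable {X₁ X₂ X₃ Z : D} {f₁ : X₁ ⟶ X₂} {f₂ : X₂ ⟶ X₃} {f₃ : X₃ ⟶ X₁⟦(1 : ℤ)⟧}

lemma eq_zero_of_comp_mor₁_eq_zero (hT : Triangle.mk f₁ f₂ f₃ ∈ distTriang D)
    (h : ∀ ν : Z ⟶ X₃⟦(-1 : ℤ)⟧, ν = 0) (φ : Z ⟶ X₁) (hφ : φ ≫ f₁ = 0) : φ = 0 := by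
  obtain ⟨ν, rfl⟩ := Triangle.coyoneda_exact₂ _ (inv_rot_of_distTriang _ hT) φ hφ
  rw [h ν]; exact zero_comp

lemma eq_zero_of_comp_shift_mor₁_eq_zero (hT : Triangle.mk f₁ f₂ f₃ ∈ distTriang D)
    (h : ∀ ν : Z ⟶ X₃, ν = 0) (φ : Z ⟶ X₁⟦(1 : ℤ)⟧) (hφ : φ ≫ f₁⟦(1 : ℤ)⟧' = 0) : φ = 0 := by
  obtain ⟨ν, hν⟩ : ∃ ν : Z ⟶ X₃, φ = ν ≫ f₃ := Triangle.coyoneda_exact₁ _ hT φ hφ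
  rw [hν, h ν, zero_comp]

lemma eq_zero_of_mor₂_comp_eq_zero (hT : Triangle.mk f₁ f₂ f₃ ∈ distTriang D)
    (h : ∀ ν : X₁⟦(1 : ℤ)⟧ ⟶ Z, ν = 0) (φ : X₃ ⟶ Z) (hφ : f₂ ≫ φ = 0) : φ = 0 := by
  obtain ⟨ν, hν⟩ : ∃ ν : X₁⟦(1 : ℤ)⟧ ⟶ Z, φ = f₃ ≫ ν := Triangle.yoneda_exact₃ _ hT φ hφ
  rw [hν, h ν, comp_zero]

end Exactness

section Refinement

/- The octahedral axiom for `g ≫ b`, which `Pretriangulated` does not provide, under vanishing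
hypotheses: `M` is the fibre of `g ≫ b`, `K` the cone of a lift `l : A ⟶ M` of `f`, and the
comparison map `t : K ⟶ X` turns out to be invertible. -/

variable {A B C X Y M K : D} {f : A ⟶ B} {g : B ⟶ C} {h : C ⟶ A⟦(1 : ℤ)⟧}
  {a : X ⟶ C} {b : C ⟶ Y} {c : Y ⟶ X⟦(1 : ℤ)⟧} {m : M ⟶ B} {s : Y ⟶ M⟦(1 : ℤ)⟧}
  {l : A ⟶ M} {p : M ⟶ K} {e : K ⟶ A⟦(1 : ℤ)⟧} {t : K ⟶ X}

lemma homs_shift_fiber_eq_zero (hT₁ : Triangle.mk f g h ∈ distTriang D)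
    (hT₂ : Triangle.mk a b c ∈ distTriang D) (hM : Triangle.mk m (g ≫ b) s ∈ distTriang D)
    (hAY : ∀ φ : A⟦(1 : ℤ)⟧ ⟶ Y, φ = 0) (hXY : ∀ φ : X⟦(1 : ℤ)⟧ ⟶ Y, φ = 0)
    (hYY : ∀ φ : Y⟦(1 : ℤ)⟧ ⟶ Y, φ = 0) (φ : M⟦(1 : ℤ)⟧ ⟶ Y) : φ = 0 := by
  have hCY := (ExistsDistTriang.shift ⟨a, b, c, hT₂⟩ 1).homs_from_obj₂_eq_zero hXY hYY
  have hBY := (ExistsDistTriang.shift ⟨f, g, h, hT₁⟩ 1).homs_from_obj₂_eq_zero hAY hCY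
  have hgbs : (g ≫ b) ≫ s = 0 := comp_distTriang_mor_zero₂₃ _ hM
  have hs : s ≫ φ = 0 := eq_zero_of_mor₂_comp_eq_zero hT₂ hXY _
    (eq_zero_of_mor₂_comp_eq_zero hT₁ hAY _ (by simp [reassoc_of% hgbs]))
  exact eq_zero_of_mor₂_comp_eq_zero (rot_of_distTriang _ hM) hBY φ hs

lemma refinement_cancel (hT₁ : Triangle.mk f g h ∈ distTriang D)
    (hM : Triangle.mk m (g ≫ b) s ∈ distTriang D) (hK : Triangle.mk l p e ∈ distTriang D)
    (hl : f = l ≫ m) (hw : p ≫ t ≫ a = m ≫ g) (he : e = t ≫ a ≫ h) {Z : D}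
    (hZ : ∀ ν : Z ⟶ Y⟦(-1 : ℤ)⟧, ν = 0) (ζ : Z ⟶ K) (hζ : ζ ≫ t = 0) : ζ = 0 := by
  obtain ⟨ζ', hζ'⟩ : ∃ ζ' : Z ⟶ M, ζ = ζ' ≫ p :=
    Triangle.coyoneda_exact₃ _ hK ζ (show ζ ≫ e = 0 by simp [he, reassoc_of% hζ])
  obtain ⟨ζ₂, hζ₂⟩ : ∃ ζ₂ : Z ⟶ A, ζ' ≫ m = ζ₂ ≫ f :=
    Triangle.coyoneda_exact₂ _ hT₁ (ζ' ≫ m)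
      (show (ζ' ≫ m) ≫ g = 0 by rw [assoc, ← hw, ← assoc, ← hζ', reassoc_of% hζ, zero_comp])
  have hζ'l : ζ' = ζ₂ ≫ l := sub_eq_zero.1 (eq_zero_of_comp_mor₁_eq_zero hM hZ _
    (by rw [Preadditive.sub_comp, assoc, ← hl, hζ₂, sub_self]))
  have hlp : l ≫ p = 0 := comp_distTriang_mor_zero₁₂ _ hK
  rw [hζ', hζ'l, assoc, hlp, comp_zero]

lemma refinement_exists_section (hT₁ : Triangle.mk f g h ∈ distTriang D)
    (hT₂ : Triangle.mk a b c ∈ distTriang D) (hM : Triangle.mk m (g ≫ b) s ∈ distTriang D)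
    (hK : Triangle.mk l p e ∈ distTriang D) (hl : f = l ≫ m) (hw : p ≫ t ≫ a = m ≫ g)
    (he : e = t ≫ a ≫ h) (hXY : ∀ φ : X ⟶ Y, φ = 0) (hXY' : ∀ φ : X ⟶ Y⟦(-1 : ℤ)⟧, φ = 0) :
    ∃ r : X ⟶ K, r ≫ t = 𝟙 X := by
  have hhf : h ≫ f⟦(1 : ℤ)⟧' = 0 := comp_distTriang_mor_zero₃₁ _ hT₁
  have hab : a ≫ b = 0 := comp_distTriang_mor_zero₁₂ _ hT₂
  obtain ⟨ψ, hψ⟩ : ∃ ψ : X ⟶ Y, (a ≫ h) ≫ l⟦(1 : ℤ)⟧' = ψ ≫ s :=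
    Triangle.coyoneda_exact₃ _ (rot_of_distTriang _ hM) _
      (show ((a ≫ h) ≫ l⟦(1 : ℤ)⟧') ≫ (-(m⟦(1 : ℤ)⟧')) = 0 by
        simp [← Functor.map_comp, ← hl, hhf])
  obtain ⟨r₀, hr₀⟩ : ∃ r₀ : X ⟶ K, a ≫ h = r₀ ≫ e :=
    Triangle.coyoneda_exact₁ _ hK _ (show (a ≫ h) ≫ l⟦(1 : ℤ)⟧' = 0 by rw [hψ, hXY ψ, zero_comp])
  obtain ⟨η, hη⟩ : ∃ η : X ⟶ B, (𝟙 X - r₀ ≫ t) ≫ a = η ≫ g :=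
    Triangle.coyoneda_exact₃ _ hT₁ _
      (show ((𝟙 X - r₀ ≫ t) ≫ a) ≫ h = 0 by
        rw [Preadditive.sub_comp, Preadditive.sub_comp, id_comp, assoc, assoc, ← he, ← hr₀,
          sub_self])
  obtain ⟨ξ, hξ⟩ : ∃ ξ : X ⟶ M, η = ξ ≫ m :=
    Triangle.coyoneda_exact₂ _ hM η (show η ≫ g ≫ b = 0 by simp [← reassoc_of% hη, hab])
  refine ⟨r₀ + ξ ≫ p, sub_eq_zero.1 (eq_zero_of_comp_mor₁_eq_zero hT₂ hXY' _ ?_)⟩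
  have : ξ ≫ p ≫ t ≫ a = a - r₀ ≫ t ≫ a := by
    rw [hw, ← assoc, ← hξ, ← hη, Preadditive.sub_comp, id_comp, assoc]
  simp only [Preadditive.sub_comp, Preadditive.add_comp, assoc, this, id_comp]
  abel

theorem exists_refinement (hT₁ : Triangle.mk f g h ∈ distTriang D)
    (hT₂ : Triangle.mk a b c ∈ distTriang D) (hAY : ∀ φ : A⟦(1 : ℤ)⟧ ⟶ Y, φ = 0)
    (hAY' : ∀ φ : A⟦(1 : ℤ)⟧ ⟶ Y⟦(-1 : ℤ)⟧, φ = 0) (hXY : ∀ φ : X ⟶ Y, φ = 0)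
    (hXY' : ∀ φ : X ⟶ Y⟦(-1 : ℤ)⟧, φ = 0) (hX₁Y : ∀ φ : X⟦(1 : ℤ)⟧ ⟶ Y, φ = 0)
    (hYY : ∀ φ : Y⟦(1 : ℤ)⟧ ⟶ Y, φ = 0) :
    ∃ M : D, ExistsDistTriang A M X ∧ ExistsDistTriang M B Y := by
  have hfg : f ≫ g = 0 := comp_distTriang_mor_zero₁₂ _ hT₁
  obtain ⟨M, m, s, hM⟩ := distinguished_cocone_triangle₁ (g ≫ b)
  have hmgb : m ≫ g ≫ b = 0 := comp_distTriang_mor_zero₁₂ _ hM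
  obtain ⟨l, hl⟩ : ∃ l : A ⟶ M, f = l ≫ m :=
    Triangle.coyoneda_exact₂ _ hM f (show f ≫ g ≫ b = 0 by simp [reassoc_of% hfg])
  obtain ⟨K, p, e, hK⟩ := distinguished_cocone_triangle l
  obtain ⟨w, hw, he⟩ : ∃ w : K ⟶ C, p ≫ w = m ≫ g ∧ e ≫ (𝟙 A)⟦(1 : ℤ)⟧' = w ≫ h :=
    complete_distinguished_triangle_morphism _ _ hK hT₁ (𝟙 A) m
      (show l ≫ m = 𝟙 A ≫ f by rw [id_comp, hl])
  obtain ⟨t, rfl⟩ : ∃ t : K ⟶ X, w = t ≫ a := Triangle.coyoneda_exact₂ _ hT₂ w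
    (eq_zero_of_mor₂_comp_eq_zero hK hAY _ (show p ≫ w ≫ b = 0 by simp [reassoc_of% hw, hmgb]))
  have he' : e = t ≫ a ≫ h := by simpa using he
  have hMY : ∀ φ : M ⟶ Y⟦(-1 : ℤ)⟧, φ = 0 := fun φ =>
    (shiftFunctor D (1 : ℤ)).map_injective (by
      rw [Functor.map_zero]
      exact eq_zero_of_iso (Iso.refl _) ((shiftFunctorCompIsoId D (-1 : ℤ) 1 (by omega)).app Y)
        (homs_shift_fiber_eq_zero hT₁ hT₂ hM hAY hX₁Y hYY) _)
  have hKY : ∀ φ : K ⟶ Y⟦(-1 : ℤ)⟧, φ = 0 :=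
    (ExistsDistTriang.rotate ⟨l, p, e, hK⟩).homs_from_obj₂_eq_zero hMY hAY'
  obtain ⟨r, hr⟩ := refinement_exists_section hT₁ hT₂ hM hK hl hw he' hXY hXY'
  have htr : t ≫ r = 𝟙 K := sub_eq_zero.1 (refinement_cancel hT₁ hM hK hl hw he' hKY _
    (by rw [Preadditive.sub_comp, assoc, hr, comp_id, id_comp, sub_self]))
  exact ⟨M, ExistsDistTriang.of_iso ⟨l, p, e, hK⟩ (Iso.refl _) (Iso.refl _) ⟨t, r, htr, hr⟩,
    m, g ≫ b, s, hM⟩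

end Refinement

section Octahedron

/- The octahedral axiom for `x ≫ y` under vanishing hypotheses: `G` is the cone of `x ≫ y`, `K`
the cone of the induced `α : P ⟶ G`, and the comparison map `τ : K ⟶ R` has a section `ς` such
that the idempotent `𝟙 - τ ≫ ς` vanishes. -/

variable {U V W P R G K : D} {x : U ⟶ V} {π : V ⟶ P} {θ : P ⟶ U⟦(1 : ℤ)⟧}
  {y : V ⟶ W} {π' : W ⟶ R} {θ' : R ⟶ V⟦(1 : ℤ)⟧} {q : W ⟶ G} {r : G ⟶ U⟦(1 : ℤ)⟧}
  {α : P ⟶ G} {u : G ⟶ K} {v : K ⟶ P⟦(1 : ℤ)⟧}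

lemma octahedron_cancel (hA : Triangle.mk x π θ ∈ distTriang D)
    (hB : Triangle.mk y π' θ' ∈ distTriang D) (hG : Triangle.mk (x ≫ y) q r ∈ distTriang D)
    (hα : π ≫ α = y ≫ q) (hθ : θ = α ≫ r) {Z : D} (hZ : ∀ ν : Z ⟶ R⟦(-1 : ℤ)⟧, ν = 0)
    (χ : Z ⟶ P) (hχ : χ ≫ α = 0) : χ = 0 := by
  obtain ⟨ψ, hψ⟩ : ∃ ψ : Z ⟶ V, χ = ψ ≫ π :=
    Triangle.coyoneda_exact₃ _ hA χ (show χ ≫ θ = 0 by rw [hθ, reassoc_of% hχ, zero_comp])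
  obtain ⟨ψ', hψ'⟩ : ∃ ψ' : Z ⟶ U, ψ ≫ y = ψ' ≫ x ≫ y :=
    Triangle.coyoneda_exact₂ _ hG (ψ ≫ y)
      (show (ψ ≫ y) ≫ q = 0 by rw [assoc, ← hα, ← assoc, ← hψ, hχ])
  have hψx : ψ = ψ' ≫ x := sub_eq_zero.1 (eq_zero_of_comp_mor₁_eq_zero hB hZ _
    (by rw [Preadditive.sub_comp, assoc, ← hψ', sub_self]))
  have hxπ : x ≫ π = 0 := comp_distTriang_mor_zero₁₂ _ hA
  rw [hψ, hψx, assoc, hxπ, comp_zero]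

lemma eq_zero_of_idempotent (hK : Triangle.mk α u v ∈ distTriang D)
    (hα : ∀ χ : P⟦(1 : ℤ)⟧ ⟶ P⟦(1 : ℤ)⟧, χ ≫ α⟦(1 : ℤ)⟧' = 0 → χ = 0) (ε : K ⟶ K)
    (hε : ε ≫ ε = ε) (huε : u ≫ ε = 0) : ε = 0 := by
  obtain ⟨ψ, hψ⟩ : ∃ ψ : P⟦(1 : ℤ)⟧ ⟶ K, ε = v ≫ ψ := Triangle.yoneda_exact₃ _ hK ε huε
  have hvα : v ≫ α⟦(1 : ℤ)⟧' = 0 := comp_distTriang_mor_zero₃₁ _ hK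
  have hψv : ψ ≫ v = 0 := hα _ (by rw [assoc, hvα, comp_zero])
  calc ε = v ≫ (ψ ≫ v) ≫ ψ := by rw [← hε, hψ]; simp only [assoc]
    _ = 0 := by rw [hψv, zero_comp, comp_zero]

lemma octahedron_comp_idempotent_eq_zero (hA : Triangle.mk x π θ ∈ distTriang D)
    (hB : Triangle.mk y π' θ' ∈ distTriang D) (hG : Triangle.mk (x ≫ y) q r ∈ distTriang D)
    (hK : Triangle.mk α u v ∈ distTriang D) (hUR : ∀ φ : U⟦(1 : ℤ)⟧ ⟶ R, φ = 0)
    (hUP : ∀ φ : U⟦(1 : ℤ)⟧ ⟶ P, φ = 0) (hUP' : ∀ φ : U⟦(1 : ℤ)⟧ ⟶ P⟦(1 : ℤ)⟧, φ = 0)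
    (ε : K ⟶ K) (hε : ε ≫ ε = ε) (hqε : q ≫ u ≫ ε = 0) : u ≫ ε = 0 := by
  obtain ⟨Ψ, hΨ⟩ : ∃ Ψ : U⟦(1 : ℤ)⟧ ⟶ K, u ≫ ε = r ≫ Ψ := Triangle.yoneda_exact₃ _ hG _ hqε
  obtain ⟨Ψ', hΨ'⟩ : ∃ Ψ' : U⟦(1 : ℤ)⟧ ⟶ G, Ψ = Ψ' ≫ u :=
    Triangle.coyoneda_exact₃ _ hK Ψ (hUP' _)
  have hr : r ≫ (x ≫ y)⟦(1 : ℤ)⟧' = 0 := comp_distTriang_mor_zero₃₁ _ hG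
  have hΨ'r : Ψ' ≫ r = 0 := eq_zero_of_comp_shift_mor₁_eq_zero hA hUP _
    (eq_zero_of_comp_shift_mor₁_eq_zero hB hUR _ (by simp [← Functor.map_comp, hr]))
  rw [hΨ'] at hΨ
  calc u ≫ ε = (u ≫ ε) ≫ ε := by rw [assoc, hε]
    _ = r ≫ (Ψ' ≫ r) ≫ Ψ' ≫ u := by rw [hΨ, assoc, assoc, hΨ]; simp only [assoc]
    _ = 0 := by rw [hΨ'r, zero_comp, comp_zero]

theorem exists_octahedron (hA : Triangle.mk x π θ ∈ distTriang D)
    (hB : Triangle.mk y π' θ' ∈ distTriang D) (hUR : ∀ φ : U⟦(1 : ℤ)⟧ ⟶ R, φ = 0)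
    (hUP : ∀ φ : U⟦(1 : ℤ)⟧ ⟶ P, φ = 0) (hUP' : ∀ φ : U⟦(1 : ℤ)⟧ ⟶ P⟦(1 : ℤ)⟧, φ = 0)
    (hVR : ∀ φ : V⟦(1 : ℤ)⟧ ⟶ R, φ = 0) (hPR : ∀ φ : P ⟶ R⟦(-1 : ℤ)⟧, φ = 0) :
    ∃ (G : D) (q : W ⟶ G) (r : G ⟶ U⟦(1 : ℤ)⟧),
      Triangle.mk (x ≫ y) q r ∈ distTriang D ∧ ExistsDistTriang P G R := by
  obtain ⟨G, q, r, hG⟩ := distinguished_cocone_triangle (x ≫ y)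
  obtain ⟨α, hα, hθ⟩ : ∃ α : P ⟶ G, π ≫ α = y ≫ q ∧ θ ≫ (𝟙 U)⟦(1 : ℤ)⟧' = α ≫ r :=
    complete_distinguished_triangle_morphism _ _ hA hG (𝟙 U) y
      (show x ≫ y = 𝟙 U ≫ x ≫ y by rw [id_comp])
  replace hθ : θ = α ≫ r := by simpa using hθ
  have hyπ' : y ≫ π' = 0 := comp_distTriang_mor_zero₁₂ _ hB
  obtain ⟨β, hβ⟩ : ∃ β : G ⟶ R, π' = q ≫ β :=
    Triangle.yoneda_exact₂ _ hG π' (show (x ≫ y) ≫ π' = 0 by rw [assoc, hyπ', comp_zero])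
  obtain ⟨K, u, v, hK⟩ := distinguished_cocone_triangle α
  have hαu : α ≫ u = 0 := comp_distTriang_mor_zero₁₂ _ hK
  obtain ⟨τ, hτ⟩ : ∃ τ : K ⟶ R, β = u ≫ τ := Triangle.yoneda_exact₂ _ hK β
    (show α ≫ β = 0 from eq_zero_of_mor₂_comp_eq_zero hA hUR _
      (by rw [← assoc, hα, assoc, ← hβ, hyπ']))
  obtain ⟨ς, hς⟩ : ∃ ς : R ⟶ K, q ≫ u = π' ≫ ς := Triangle.yoneda_exact₂ _ hB (q ≫ u)
    (show y ≫ q ≫ u = 0 by rw [← assoc, ← hα, assoc, hαu, comp_zero])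
  have hςτ : ς ≫ τ = 𝟙 R := sub_eq_zero.1 (eq_zero_of_mor₂_comp_eq_zero hB hVR _
    (by rw [Preadditive.comp_sub, ← assoc, ← hς, assoc, ← hτ, ← hβ, comp_id, sub_self]))
  have hαc : ∀ χ : P⟦(1 : ℤ)⟧ ⟶ P⟦(1 : ℤ)⟧, χ ≫ α⟦(1 : ℤ)⟧' = 0 → χ = 0 := by
    intro χ hχ
    obtain ⟨χ', rfl⟩ := (shiftFunctor D (1 : ℤ)).map_surjective χ
    rw [octahedron_cancel hA hB hG hα hθ hPR χ' ((shiftFunctor D (1 : ℤ)).map_injective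
      (by rwa [Functor.map_comp, Functor.map_zero])), Functor.map_zero]
  have hε : (𝟙 K - τ ≫ ς) ≫ (𝟙 K - τ ≫ ς) = 𝟙 K - τ ≫ ς := by
    simp [Preadditive.sub_comp, Preadditive.comp_sub, reassoc_of% hςτ]
  have hτς : τ ≫ ς = 𝟙 K := (sub_eq_zero.1 (eq_zero_of_idempotent hK hαc _ hε
    (octahedron_comp_idempotent_eq_zero hA hB hG hK hUR hUP hUP' _ hε
      (by rw [Preadditive.comp_sub, Preadditive.comp_sub, comp_id, ← assoc u, ← hτ,
        ← assoc, ← hβ, hς, sub_self])))).symm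
  exact ⟨G, q, r, hG, ExistsDistTriang.of_iso ⟨α, u, v, hK⟩ (Iso.refl _) (Iso.refl _)
    ⟨τ, ς, hτς, hςτ⟩⟩

end Octahedron

section Orthogonality

variable {C : Type*} [Category C] [Preadditive C] [HasShift C ℤ]

def HasNoNegativeExt (A : Set C) : Prop :=
  ∀ A₁ ∈ A, ∀ A₂ ∈ A, ∀ k : ℤ, k < 0 → ∀ f : A₁ ⟶ A₂⟦k⟧, f = 0

def OrthogonalToShifts (A : Set C) (c : ℤ) (E : C) : Prop :=
  ∀ Z ∈ A, ∀ d ≤ c, ∀ f : E ⟶ Z⟦d⟧, f = 0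

namespace OrthogonalToShifts

variable {A : Set C} {c : ℤ} {E : C}

lemma mono (h : OrthogonalToShifts A c E) {c' : ℤ} (hc : c' ≤ c) : OrthogonalToShifts A c' E :=
  fun Z hZ d hd => h Z hZ d (hd.trans hc)

lemma of_isZero (hE : IsZero E) : OrthogonalToShifts A c E :=
  fun _ _ _ _ f => hE.eq_of_src f 0

lemma shift [∀ n : ℤ, (shiftFunctor C n).Additive] (h : OrthogonalToShifts A c E) (s : ℤ) :
    OrthogonalToShifts A (c + s) (E⟦s⟧) :=
  fun Z hZ d hd => eq_zero_of_iso (Iso.refl _)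
    ((shiftFunctorAdd' C (d - s) s d (by omega)).app Z) (eq_zero_of_shift (h Z hZ _ (by omega)) s)

lemma eq_zero_shift_shift (h : OrthogonalToShifts A c E) {Z : C} (hZ : Z ∈ A) {a b : ℤ}
    (hab : a + b ≤ c) (f : E ⟶ Z⟦a⟧⟦b⟧) : f = 0 :=
  eq_zero_of_iso (Iso.refl _) ((shiftFunctorAdd' C a b (a + b) rfl).app Z).symm (h Z hZ _ hab) f

lemma eq_zero_of_nonneg (h : OrthogonalToShifts A c E) {Z : C} (hZ : Z ∈ A) (hc : 0 ≤ c)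
    (f : E ⟶ Z) : f = 0 :=
  eq_zero_of_iso (Iso.refl _) ((shiftFunctorZero C ℤ).app Z).symm (h Z hZ 0 hc) f

end OrthogonalToShifts

lemma HasNoNegativeExt.orthogonal {A : Set C} (hA : HasNoNegativeExt A) {B : C} (hB : B ∈ A) :
    OrthogonalToShifts A (-1) B :=
  fun Z hZ d hd => hA B hB Z hZ d (by omega)

lemma HasNoNegativeExt.orthogonal_shift [∀ n : ℤ, (shiftFunctor C n).Additive] {A : Set C}
    (hA : HasNoNegativeExt A) {B : C} (hB : B ∈ A) (k : ℤ) :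
    OrthogonalToShifts A (k - 1) (B⟦k⟧) :=
  ((hA.orthogonal hB).shift k).mono (by omega)

end Orthogonality

lemma OrthogonalToShifts.of_distTriang {A : Set D} {c : ℤ} {E₁ E₂ E₃ : D}
    (hT : ExistsDistTriang E₁ E₂ E₃) (h₁ : OrthogonalToShifts A c E₁)
    (h₃ : OrthogonalToShifts A c E₃) : OrthogonalToShifts A c E₂ :=
  fun Z hZ d hd => hT.homs_from_obj₂_eq_zero (h₁ Z hZ d hd) (h₃ Z hZ d hd)

/-- `HasFiltration S E lo`: `E` has a finite filtration `0 = F₀ → F₁ → ⋯ → Fₙ = E` by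
distinguished triangles `Fᵢ → Fᵢ₊₁ → Bᵢ⟦kᵢ⟧` with `Bᵢ ∈ S` and `k₀ > k₁ > ⋯ > kₙ₋₁ > lo`. -/
inductive HasFiltration (S : Set D) : D → ℤ → Prop
  | zero {E : D} (lo : ℤ) (hE : IsZero E) : HasFiltration S E lo
  | step {F E B : D} {k lo : ℤ} (hF : HasFiltration S F k) (hB : B ∈ S) (hk : lo < k)
      (hT : ExistsDistTriang F E (B⟦k⟧)) : HasFiltration S E lo

namespace HasFiltration

variable {S : Set D} {E : D} {lo : ℤ}

lemma exists_mem (h : HasFiltration S E lo) (hE : ¬ IsZero E) : ∃ B, B ∈ S := by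
  cases h with
  | zero _ hE' => exact absurd hE' hE
  | step _ hB _ _ => exact ⟨_, hB⟩

lemma orthogonal {A : Set D} (hS : ∀ B ∈ S, OrthogonalToShifts A (-1) B)
    (h : HasFiltration S E lo) : OrthogonalToShifts A lo E := by
  induction h with
  | zero _ hE => exact .of_isZero hE
  | step _ hB hk hT ih =>
    exact .of_distTriang hT (ih.mono hk.le) (((hS _ hB).shift _).mono (by omega))

end HasFiltration

lemma hasFiltration_of_fin {S : Set D} {n : ℕ} {Fl : Fin (n + 1) → D}
    {g : ∀ i : Fin n, Fl i.castSucc ⟶ Fl i.succ} {ks : Fin n → ℤ} (h0 : IsZero (Fl 0))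
    (hks : ∀ i j : Fin n, i < j → ks j < ks i)
    (hfac : ∀ i : Fin n, ∃ (Q : D) (q : Fl i.succ ⟶ Q) (h : Q ⟶ (Fl i.castSucc)⟦(1 : ℤ)⟧),
      Triangle.mk (g i) q h ∈ distTriang D ∧ ∃ B ∈ S, Nonempty (Q ≅ B⟦ks i⟧))
    (t : ℕ) (ht : t ≤ n) (lo : ℤ) (hlo : ∀ i : Fin n, i.val < t → lo < ks i) :
    HasFiltration S (Fl ⟨t, by omega⟩) lo := by
  induction t generalizing lo with
  | zero => exact .zero lo h0
  | succ t ih =>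
    let i : Fin n := ⟨t, by omega⟩
    obtain ⟨Q, q, h, hT, B, hB, ⟨e⟩⟩ := hfac i
    exact .step (ih (by omega) (ks i) fun j hj => hks j i hj) hB (hlo i (Nat.lt_succ_self t))
      (ExistsDistTriang.of_iso ⟨g i, q, h, hT⟩ (Iso.refl _) (Iso.refl _) e)

lemma HasFiltration.exists_fin {S : Set D} {E : D} {lo : ℤ} (h : HasFiltration S E lo) :
    ∃ (n : ℕ) (Fl : Fin (n + 1) → D) (g : ∀ i : Fin n, Fl i.castSucc ⟶ Fl i.succ)
      (ks : Fin n → ℤ), IsZero (Fl 0) ∧ Fl (Fin.last n) = E ∧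
      (∀ i j : Fin n, i < j → ks j < ks i) ∧ (∀ i, lo < ks i) ∧
      ∀ i : Fin n, ∃ (Q : D) (q : Fl i.succ ⟶ Q) (h : Q ⟶ (Fl i.castSucc)⟦(1 : ℤ)⟧),
        Triangle.mk (g i) q h ∈ distTriang D ∧ ∃ B ∈ S, Nonempty (Q ≅ B⟦ks i⟧) := by
  induction h with
  | @zero E lo hE =>
    exact ⟨0, fun _ => E, fun i => i.elim0, fun i => i.elim0, hE, rfl, fun i => i.elim0,
      fun i => i.elim0, fun i => i.elim0⟩
  | @step F E B k lo _ hB hk hT ih =>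
    obtain ⟨n, Fl, g, ks, h0, rfl, hks, hlo, hfac⟩ := ih
    obtain ⟨f, q, h, hT⟩ := hT
    refine ⟨n + 1, Fin.snoc Fl E,
      Fin.lastCases (eqToHom (by simp) ≫ f ≫ eqToHom (by simp))
        (fun j => eqToHom (by simp) ≫ g j ≫ eqToHom (by rw [Fin.succ_castSucc, Fin.snoc_castSucc])),
      Fin.snoc ks k, by rwa [← Fin.castSucc_zero, Fin.snoc_castSucc], by simp, ?_, ?_, ?_⟩
    · intro i j hij
      induction j using Fin.lastCases with
      | last =>
        induction i using Fin.lastCases with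
        | last => exact absurd hij (lt_irrefl _)
        | cast i => simpa using hlo i
      | cast j =>
        induction i using Fin.lastCases with
        | last => exact absurd hij (not_lt.2 (Fin.le_last _))
        | cast i => simpa using hks i j (by simpa using hij)
    · intro i
      induction i using Fin.lastCases with
      | last => simpa using hk
      | cast i => simpa using hk.trans (hlo i)
    · intro i
      induction i using Fin.lastCases with
      | last =>
        simp only [Fin.lastCases_last]
        exact ⟨_, _, _, distTriang_eqToHom hT (by simp) (by simp), B, hB, ⟨eqToIso (by simp)⟩⟩
      | cast j =>
        simp only [Fin.lastCases_castSucc]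
        obtain ⟨Q, q, h, hT, B, hB, ⟨e⟩⟩ := hfac j
        exact ⟨_, _, _, distTriang_eqToHom hT (by simp)
          (by rw [Fin.succ_castSucc, Fin.snoc_castSucc]), B, hB, ⟨e ≪≫ eqToIso (by simp)⟩⟩

theorem isHeartOfBoundedTStructure_iff {A : Set D} :
    IsHeartOfBoundedTStructure A ↔
      HasNoNegativeExt A ∧ ∀ E : D, ¬ IsZero E → ∃ lo, HasFiltration A E lo := by
  refine and_congr_right fun _ => forall₂_congr fun E _ => ⟨?_, ?_⟩
  · rintro ⟨n, Fl, g, ks, h0, rfl, hks, hfac⟩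
    obtain ⟨lo, hlo⟩ := (Set.finite_range ks).bddBelow
    exact ⟨lo - 1, hasFiltration_of_fin h0 hks hfac n le_rfl _ fun i _ => by
      have := hlo ⟨i, rfl⟩
      omega⟩
  · rintro ⟨lo, h⟩
    obtain ⟨n, Fl, g, ks, h0, hE, hks, -, hfac⟩ := h.exists_fin
    exact ⟨n, Fl, g, ks, h0, hE, hks, hfac⟩

structure IsTorsionPair (A T F : Set D) : Prop where
  torsion_subset : T ⊆ A
  torsionFree_subset : F ⊆ A
  hom_eq_zero : ∀ X ∈ T, ∀ Y ∈ F, ∀ f : X ⟶ Y, f = 0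
  exists_distTriang : ∀ E ∈ A, ∃ X ∈ T, ∃ Y ∈ F, ExistsDistTriang X E Y

/-- `E ∈ tilt T F` encodes `H⁻¹(E) ∈ F`, `H⁰(E) ∈ T` and `Hⁱ(E) = 0` otherwise, through the
truncation triangle `H⁻¹(E)⟦1⟧ → E → H⁰(E)`. -/
def tilt (T F : Set D) : Set D :=
  {E | ∃ Y ∈ F, ∃ X ∈ T, ExistsDistTriang (Y⟦(1 : ℤ)⟧) E X}

section Tilt

variable {A T F : Set D}

lemma IsTorsionPair.exists_isZero (hA : HasNoNegativeExt A) (hT : IsTorsionPair A T F) {B : D}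
    (hB : B ∈ A) : (∃ X ∈ T, IsZero X) ∧ ∃ Y ∈ F, IsZero Y := by
  obtain ⟨X₀, hX₀, Y₀, hY₀, -⟩ := hT.exists_distTriang B hB
  -- the torsion part of `Y₀` and the torsion-free quotient of `X₀` vanish
  obtain ⟨X, hX, Y, hY, f, _, _, hXY⟩ := hT.exists_distTriang Y₀ (hT.torsionFree_subset hY₀)
  obtain ⟨X', hX', Y', hY', _, g, _, hXY'⟩ := hT.exists_distTriang X₀ (hT.torsion_subset hX₀)
  refine ⟨⟨X, hX, (IsZero.iff_id_eq_zero _).2 ?_⟩, ⟨Y', hY', (IsZero.iff_id_eq_zero _).2 ?_⟩⟩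
  · exact eq_zero_of_comp_mor₁_eq_zero hXY
      (hA _ (hT.torsion_subset hX) _ (hT.torsionFree_subset hY) (-1) (by omega)) _
      (by rw [id_comp]; exact hT.hom_eq_zero X hX Y₀ hY₀ f)
  · exact eq_zero_of_mor₂_comp_eq_zero hXY'
      (((hA.orthogonal (hT.torsion_subset hX')).shift 1).eq_zero_of_nonneg
        (hT.torsionFree_subset hY') (by omega)) _
      (by rw [comp_id]; exact hT.hom_eq_zero X₀ hX₀ Y' hY' g)

lemma mem_tilt_of_mem_torsion (hF₀ : ∃ Y ∈ F, IsZero Y) {X : D} (hX : X ∈ T) :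
    X ∈ tilt T F := by
  obtain ⟨Y, hY, hY₀⟩ := hF₀
  exact ⟨Y, hY, X, hX, ExistsDistTriang.of_iso ⟨0, 𝟙 X, 0, contractible_distinguished₁ X⟩
    ((isZero_zero D).iso ((shiftFunctor D (1 : ℤ)).map_isZero hY₀)) (Iso.refl _) (Iso.refl _)⟩

lemma shift_mem_tilt_of_mem_torsionFree (hT₀ : ∃ X ∈ T, IsZero X) {Y : D} (hY : Y ∈ F) :
    Y⟦(1 : ℤ)⟧ ∈ tilt T F := by
  obtain ⟨X, hX, hX₀⟩ := hT₀
  exact ⟨Y, hY, X, hX, ExistsDistTriang.of_iso ⟨_, _, _, contractible_distinguished _⟩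
    (Iso.refl _) (Iso.refl _) ((isZero_zero D).iso hX₀)⟩

lemma shift_neg_mem_tilt {X Y G : D} (hX : X ∈ T) (hY : Y ∈ F) {k : ℤ}
    (hG : ExistsDistTriang (Y⟦k + 1⟧) G (X⟦k⟧)) : G⟦-k⟧ ∈ tilt T F :=
  ⟨Y, hY, X, hX, (hG.shift (-k)).of_iso
    ((shiftFunctorAdd' D (k + 1) (-k) 1 (by omega)).app Y).symm (Iso.refl _)
    ((shiftFunctorCompIsoId D k (-k) (by omega)).app X)⟩

lemma orthogonal_of_mem_tilt (hA : HasNoNegativeExt A) (hT : IsTorsionPair A T F) {E : D}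
    (hE : E ∈ tilt T F) : OrthogonalToShifts A (-1) E := by
  obtain ⟨Y, hY, X, hX, hYEX⟩ := hE
  exact .of_distTriang hYEX (((hA.orthogonal (hT.torsionFree_subset hY)).shift 1).mono (by omega))
    (hA.orthogonal (hT.torsion_subset hX))

theorem hasNoNegativeExt_tilt (hA : HasNoNegativeExt A) (hT : IsTorsionPair A T F) :
    HasNoNegativeExt (tilt T F) := by
  rintro E₁ ⟨Y₁, hY₁, X₁, hX₁, hE₁⟩ E₂ ⟨Y₂, hY₂, X₂, hX₂, hE₂⟩ k hk
  have hX₁' := hA.orthogonal (hT.torsion_subset hX₁)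
  have hY₁' := (hA.orthogonal (hT.torsionFree_subset hY₁)).shift 1
  refine hE₁.homs_from_obj₂_eq_zero ((hE₂.shift k).homs_to_obj₂_eq_zero ?_ ?_)
    ((hE₂.shift k).homs_to_obj₂_eq_zero ?_ ?_)
  · exact hY₁'.eq_zero_shift_shift (hT.torsionFree_subset hY₂) (by omega)
  · exact hY₁' _ (hT.torsion_subset hX₂) _ (by omega)
  · rcases (by omega : k = -1 ∨ k < -1) with rfl | hk'
    · exact eq_zero_of_iso (Iso.refl _) ((shiftFunctorCompIsoId D 1 (-1) (by omega)).app Y₂)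
        (hT.hom_eq_zero X₁ hX₁ Y₂ hY₂)
    · exact hX₁'.eq_zero_shift_shift (hT.torsionFree_subset hY₂) (by omega)
  · exact hX₁' _ (hT.torsion_subset hX₂) _ (by omega)

lemma hasFiltration_tilt_of_lt (hT₀ : ∃ X ∈ T, IsZero X) (hF₀ : ∃ Y ∈ F, IsZero Y)
    {M' E M X Y : D} {k m : ℤ} (hkm : k + 1 < m) (hM' : HasFiltration (tilt T F) M' (m - 1))
    (hY : Y ∈ F) (hM'E : ExistsDistTriang M' E (Y⟦m⟧)) (hX : X ∈ T)
    (hEM : ExistsDistTriang E M (X⟦k⟧)) : HasFiltration (tilt T F) M (k - 1) :=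
  .step (.step hM' (shift_mem_tilt_of_mem_torsionFree hT₀ hY) (by omega)
      (hM'E.of_iso (Iso.refl _) (Iso.refl _) ((shiftFunctorAdd' D 1 (m - 1) m (by omega)).app Y)))
    (mem_tilt_of_mem_torsion hF₀ hX) (by omega) hEM

lemma hasFiltration_tilt_of_merge (hA : HasNoNegativeExt A) (hT : IsTorsionPair A T F)
    {M' E M X Y : D} {k : ℤ} (hM' : HasFiltration (tilt T F) M' k) (hY : Y ∈ F)
    (hM'Y : ∀ φ : M' ⟶ Y⟦k + 1⟧, φ = 0) (hM'E : ExistsDistTriang M' E (Y⟦k + 1⟧))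
    (hE : OrthogonalToShifts A k E) (hX : X ∈ T) (hEM : ExistsDistTriang E M (X⟦k⟧)) :
    HasFiltration (tilt T F) M (k - 1) := by
  obtain ⟨x, π, θ, hM'E⟩ := hM'E
  obtain ⟨y, π', θ', hEM⟩ := hEM
  have hM'' := (hM'.orthogonal fun _ => orthogonal_of_mem_tilt hA hT).shift 1
  have hXA := hT.torsion_subset hX
  have hYA := hT.torsionFree_subset hY
  obtain ⟨G, q, r, hG, hYGX⟩ := exists_octahedron hM'E hEM (hM'' _ hXA k (by omega))
    (hM'' _ hYA (k + 1) le_rfl) (eq_zero_of_shift hM'Y 1) (hE.shift 1 _ hXA k (by omega))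
    ((hA.orthogonal_shift hYA (k + 1)).eq_zero_shift_shift hXA (by omega))
  exact .step hM' (shift_neg_mem_tilt hX hY hYGX) (by omega)
    (ExistsDistTriang.of_iso ⟨_, _, _, hG⟩ (Iso.refl _) (Iso.refl _)
      ((shiftFunctorCompIsoId D (-k) k (by omega)).app G).symm)

/-- A filtration of `E` by `tilt T F` whose last factor `Y⟦m⟧ = Y⟦1⟧⟦m - 1⟧` is kept apart, since
the next factor may have to be merged with it (which needs `Hom(M, Y⟦m⟧) = 0`). -/
def HasTiltFiltrationWithTail (T F : Set D) (E : D) (m : ℤ) : Prop :=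
  ∃ M : D, HasFiltration (tilt T F) M (m - 1) ∧
    ∃ Y ∈ F, (∀ φ : M ⟶ Y⟦m⟧, φ = 0) ∧ ExistsDistTriang M E (Y⟦m⟧)

lemma HasTiltFiltrationWithTail.extend (hA : HasNoNegativeExt A) (hT : IsTorsionPair A T F)
    (hT₀ : ∃ X ∈ T, IsZero X) (hF₀ : ∃ Y ∈ F, IsZero Y) {E₁ E₂ B : D} {k m : ℤ} (hkm : k < m)
    (h : HasTiltFiltrationWithTail T F E₁ m) (hE₁ : OrthogonalToShifts A k E₁) (hB : B ∈ A)
    (hE₁E₂ : ExistsDistTriang E₁ E₂ (B⟦k⟧)) : HasTiltFiltrationWithTail T F E₂ k := by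
  obtain ⟨M', hM', Y', hY', hM'Y', hM'E₁⟩ := h
  obtain ⟨X, hX, Y, hY, hXBY⟩ := hT.exists_distTriang B hB
  obtain ⟨f, g, h, hT₁⟩ := hE₁E₂
  obtain ⟨a, b, c, hT₂⟩ := hXBY.shift k
  have hXA := hT.torsion_subset hX
  have hYA := hT.torsionFree_subset hY
  have hXY : ∀ φ : X⟦k⟧ ⟶ Y⟦k⟧, φ = 0 := eq_zero_of_shift (hT.hom_eq_zero X hX Y hY) k
  have hXk := hA.orthogonal_shift hXA k
  obtain ⟨M, hE₁M, hME₂⟩ := exists_refinement hT₁ hT₂ (hE₁.shift 1 _ hYA k (by omega))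
    ((hE₁.shift 1).eq_zero_shift_shift hYA (by omega)) hXY (hXk.eq_zero_shift_shift hYA (by omega))
    (hXk.shift 1 _ hYA k (by omega)) ((hA.orthogonal_shift hYA k).shift 1 _ hYA k (by omega))
  refine ⟨M, ?_, Y, hY, hE₁M.homs_from_obj₂_eq_zero (hE₁ _ hYA k le_rfl) hXY, hME₂⟩
  rcases (by omega : m = k + 1 ∨ k + 1 < m) with rfl | hkm'
  · exact hasFiltration_tilt_of_merge hA hT (by simpa using hM') hY' hM'Y' hM'E₁ hE₁ hX hE₁M
  · exact hasFiltration_tilt_of_lt hT₀ hF₀ hkm' hM' hY' hM'E₁ hX hE₁M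

theorem HasFiltration.exists_hasTiltFiltrationWithTail (hA : HasNoNegativeExt A)
    (hT : IsTorsionPair A T F) (hT₀ : ∃ X ∈ T, IsZero X) (hF₀ : ∃ Y ∈ F, IsZero Y) {E : D} {lo : ℤ}
    (h : HasFiltration A E lo) : ∃ m, lo < m ∧ HasTiltFiltrationWithTail T F E m := by
  induction h with
  | @zero E lo hE =>
    obtain ⟨Y, hY, hY₀⟩ := hF₀
    exact ⟨lo + 1, by omega, E, .zero _ hE, Y, hY, fun φ => hE.eq_of_src φ 0,
      ExistsDistTriang.of_iso ⟨_, _, _, contractible_distinguished E⟩ (Iso.refl _) (Iso.refl _)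
        ((isZero_zero D).iso ((shiftFunctor D _).map_isZero hY₀))⟩
  | step hE₁ hB hk hE₁E₂ ih =>
    obtain ⟨m, hkm, hm⟩ := ih
    exact ⟨_, hk, hm.extend hA hT hT₀ hF₀ hkm (hE₁.orthogonal fun _ => hA.orthogonal) hB hE₁E₂⟩

theorem HasFiltration.tilt (hA : HasNoNegativeExt A) (hT : IsTorsionPair A T F) {B : D}
    (hB : B ∈ A) {E : D} {lo : ℤ} (h : HasFiltration A E lo) :
    HasFiltration (tilt T F) E (lo - 1) := by
  obtain ⟨hT₀, hF₀⟩ := hT.exists_isZero hA hB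
  obtain ⟨m, hm, M, hM, Y, hY, -, hME⟩ := h.exists_hasTiltFiltrationWithTail hA hT hT₀ hF₀
  exact .step hM (shift_mem_tilt_of_mem_torsionFree hT₀ hY) (by omega)
    (hME.of_iso (Iso.refl _) (Iso.refl _) ((shiftFunctorAdd' D 1 (m - 1) m (by omega)).app Y))

theorem isHeartOfBoundedTStructure_tilt (hA : IsHeartOfBoundedTStructure A)
    (hT : IsTorsionPair A T F) : IsHeartOfBoundedTStructure (tilt T F) := by
  rw [isHeartOfBoundedTStructure_iff] at hA ⊢
  refine ⟨hasNoNegativeExt_tilt hA.1 hT, fun E hE => ?_⟩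
  obtain ⟨lo, h⟩ := hA.2 E hE
  obtain ⟨B, hB⟩ := h.exists_mem hE
  exact ⟨lo - 1, h.tilt hA.1 hT hB⟩

end Tilt

end HeartTilting

/-- (Happel–Reiten–Smalø) Let `A` be the heart of a bounded t-structure on a triangulated
category `D` and `(Tc, Fc)` a torsion pair in `A`. Then the tilted subcategory
`A♯ = {E | H⁻¹(E) ∈ Fc, H⁰(E) ∈ Tc, Hⁱ(E) = 0 otherwise}`, i.e. the class of objects `E`
sitting in a distinguished triangle `Y[1] → E → X` with `Y ∈ Fc` and `X ∈ Tc`, is the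
heart of a bounded t-structure on `D`. -/
theorem statement8 {D : Type u} [Category.{v} D] [HasZeroObject D] [Preadditive D]
    [HasShift D ℤ] [∀ n : ℤ, (shiftFunctor D n).Additive] [Pretriangulated D]
    (A : Set D) (hA : IsHeartOfBoundedTStructure A)
    (Tc Fc : Set D) (hTc : Tc ⊆ A) (hFc : Fc ⊆ A)
    (hom_zero : ∀ X ∈ Tc, ∀ Y ∈ Fc, ∀ f : X ⟶ Y, f = 0)
    (decomp : ∀ E ∈ A, ∃ X ∈ Tc, ∃ Y ∈ Fc, ∃ (f : X ⟶ E) (g : E ⟶ Y)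
      (h : Y ⟶ (shiftFunctor D (1 : ℤ)).obj X), Triangle.mk f g h ∈ distTriang D) :
    IsHeartOfBoundedTStructure
      {E : D | ∃ Y ∈ Fc, ∃ X ∈ Tc,
        ∃ (f : (shiftFunctor D (1 : ℤ)).obj Y ⟶ E) (g : E ⟶ X)
          (h : X ⟶ (shiftFunctor D (1 : ℤ)).obj ((shiftFunctor D (1 : ℤ)).obj Y)),
        Triangle.mk f g h ∈ distTriang D} :=
  HeartTilting.isHeartOfBoundedTStructure_tilt hA ⟨hTc, hFc, hom_zero, decomp⟩
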